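/- Let N ≥ 2, M = (N−1)² + 1, U ∈ (0,1), q ∈ ℂ^N, and let D = {(fₖ,θₖ)}_{k=1}^K ⊂ [0,1)×[0,U]. Suppose the dual polynomial Q(f,θ) = Σ_{n=0}^{N−1} q(n) e^{−2πi(fn+θn²)} satisfies |Q(f,θ)| ≤ 1 on [0,1)×[0,U] and |Q(f,θ)| < 1 for (f,θ) ∈ ([0,1)×[0,U]) \ D. Let z = Σᵢ c'ᵢ d(f'ᵢ,θ'ᵢ) be any finite atomic decomposition with (f'ᵢ,θ'ᵢ) ∈ [0,1)×[0,U] pairwise distinct and all c'ᵢ ≠ 0, and suppose some (f'ᵢ,θ'ᵢ) ∉ D. Then Re⟨q, Pz⟩ < Σᵢ |c'ᵢ|, where ⟨q, Pz⟩ = Σ_{n=0}^{N−1} conj(q(n))·(Pz)(n). -/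

import Mathlib

open Complex Set
open scoped Real ENNReal ComplexConjugate ComplexOrder

noncomputable section

def atomA (N : ℕ) (f : ℝ) : Fin N → ℂ :=
  fun n => Complex.exp (2 * (Real.pi : ℂ) * Complex.I * ((n : ℕ) : ℂ) * (f : ℂ))

def atomB (N : ℕ) (θ : ℝ) : Fin ((N - 1) ^ 2 + 1) → ℂ :=
  fun m => Complex.exp (2 * (Real.pi : ℂ) * Complex.I * ((m : ℕ) : ℂ) * (θ : ℂ))

def atomD (N : ℕ) (f θ : ℝ) : Fin N × Fin ((N - 1) ^ 2 + 1) → ℂ :=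
  fun p => atomA N f p.1 * atomB N θ p.2

def meas (N : ℕ) (z : Fin N × Fin ((N - 1) ^ 2 + 1) → ℂ) : Fin N → ℂ :=
  fun n => z (n, ⟨n.1 ^ 2, by
    have h1 : n.1 < N := n.2
    have h2 : n.1 ^ 2 ≤ (N - 1) ^ 2 := Nat.pow_le_pow_left (by omega) 2
    omega⟩)

def atomicNorm (N : ℕ) (U : ℝ) (z : Fin N × Fin ((N - 1) ^ 2 + 1) → ℂ) : ℝ≥0∞ :=
  sInf { s : ℝ≥0∞ | ∃ (K : ℕ) (c : Fin K → ℂ) (f θ : Fin K → ℝ),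
    (∀ k, f k ∈ Set.Ico (0 : ℝ) 1) ∧ (∀ k, θ k ∈ Set.Icc (0 : ℝ) U) ∧
    z = ∑ k, c k • atomD N (f k) (θ k) ∧
    s = ∑ k, ENNReal.ofReal (‖c k‖) }

def dualPoly (N : ℕ) (q : Fin N → ℂ) (f θ : ℝ) : ℂ :=
  ∑ n : Fin N, q n * Complex.exp (-(2 * (Real.pi : ℂ) * Complex.I) *
    ((f : ℂ) * ((n : ℕ) : ℂ) + (θ : ℂ) * ((n : ℕ) : ℂ) ^ 2))

def twoFoldToep (N : ℕ) (T : ℤ → ℤ → ℂ) :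
    Matrix (Fin N × Fin ((N - 1) ^ 2 + 1)) (Fin N × Fin ((N - 1) ^ 2 + 1)) ℂ :=
  Matrix.of fun p q => T (((p.1 : ℕ) : ℤ) - ((q.1 : ℕ) : ℤ)) (((p.2 : ℕ) : ℤ) - ((q.2 : ℕ) : ℤ))

def twoFoldToepG (N : ℕ) (U : ℝ) (T : ℤ → ℤ → ℂ) :
    Matrix (Fin N × Fin ((N - 1) ^ 2)) (Fin N × Fin ((N - 1) ^ 2)) ℂ :=
  Matrix.of fun p q =>
    Complex.exp ((Real.pi : ℂ) * Complex.I * (U : ℂ)) *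
        T (((p.1 : ℕ) : ℤ) - ((q.1 : ℕ) : ℤ)) (((p.2 : ℕ) : ℤ) - ((q.2 : ℕ) : ℤ) + 1)
      + ((-2 * Real.cos (Real.pi * U) : ℝ) : ℂ) *
        T (((p.1 : ℕ) : ℤ) - ((q.1 : ℕ) : ℤ)) (((p.2 : ℕ) : ℤ) - ((q.2 : ℕ) : ℤ))
      + conj (Complex.exp ((Real.pi : ℂ) * Complex.I * (U : ℂ))) *
        T (((p.1 : ℕ) : ℤ) - ((q.1 : ℕ) : ℤ)) (((p.2 : ℕ) : ℤ) - ((q.2 : ℕ) : ℤ) - 1)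

def blockMat {ι : Type*} [Fintype ι] (W : Matrix ι ι ℂ) (z : ι → ℂ) (t : ℝ) :
    Matrix (ι ⊕ Unit) (ι ⊕ Unit) ℂ :=
  Matrix.fromBlocks W (Matrix.of fun i (_ : Unit) => z i)
    (Matrix.of fun (_ : Unit) j => conj (z j)) (Matrix.of fun (_ : Unit) (_ : Unit) => (t : ℂ))

def sdpVal (N : ℕ) (U : ℝ) (z : Fin N × Fin ((N - 1) ^ 2 + 1) → ℂ) : ℝ≥0∞ :=
  sInf { s : ℝ≥0∞ | ∃ (T : ℤ → ℤ → ℂ) (t : ℝ),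
    (blockMat (twoFoldToep N T) z t).PosSemidef ∧
    (twoFoldToepG N U T).PosSemidef ∧
    s = ENNReal.ofReal ((1 / (2 * ((N * ((N - 1) ^ 2 + 1) : ℕ) : ℝ))) *
          ((twoFoldToep N T).trace).re + t / 2) }

def measMat (N : ℕ) : Matrix (Fin N) (Fin N × Fin ((N - 1) ^ 2 + 1)) ℂ :=
  Matrix.of fun n p => if p.1 = n ∧ (p.2 : ℕ) = n.1 ^ 2 then 1 else 0

def gval (U θ : ℝ) : ℂ :=
  Complex.exp ((Real.pi : ℂ) * Complex.I * (U : ℂ)) * Complex.exp (-(2 * (Real.pi : ℂ) * Complex.I) * (θ : ℂ))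
    + ((-2 * Real.cos (Real.pi * U) : ℝ) : ℂ)
    + conj (Complex.exp ((Real.pi : ℂ) * Complex.I * (U : ℂ))) * Complex.exp ((2 * (Real.pi : ℂ) * Complex.I) * (θ : ℂ))

def atomBt (N : ℕ) (θ : ℝ) : Fin ((N - 1) ^ 2) → ℂ :=
  fun m => Complex.exp (2 * (Real.pi : ℂ) * Complex.I * ((m : ℕ) : ℂ) * (θ : ℂ))

def atomDt (N : ℕ) (f θ : ℝ) : Fin N × Fin ((N - 1) ^ 2) → ℂ :=
  fun p => atomA N f p.1 * atomBt N θ p.2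

/-! The measurement `P` keeps only the coordinates `(n, n²)` of an atom, so pairing `q` with the
measured atom `d(f, θ)` gives `conj (Q(f, θ))`. Hence `Re⟨q, Pz⟩ = ∑ Re (c'ᵢ conj Q(f'ᵢ, θ'ᵢ))`,
each term is at most `|c'ᵢ|` since `|Q| ≤ 1`, and the term of an atom outside `D` is strictly
smaller because there `|Q| < 1` and `c'ᵢ ≠ 0`. -/

lemma re_mul_le_norm_of_norm_le_one {c w : ℂ} (hw : ‖w‖ ≤ 1) : (c * w).re ≤ ‖c‖ :=
  calc (c * w).re ≤ ‖c * w‖ := Complex.re_le_norm _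
    _ = ‖c‖ * ‖w‖ := norm_mul c w
    _ ≤ ‖c‖ := mul_le_of_le_one_right (norm_nonneg c) hw

lemma re_mul_lt_norm_of_norm_lt_one {c w : ℂ} (hc : c ≠ 0) (hw : ‖w‖ < 1) :
    (c * w).re < ‖c‖ :=
  calc (c * w).re ≤ ‖c * w‖ := Complex.re_le_norm _
    _ = ‖c‖ * ‖w‖ := norm_mul c w
    _ < ‖c‖ := mul_lt_of_lt_one_right (norm_pos_iff.mpr hc) hw

lemma re_sum_mul_lt_sum_norm {ι : Type*} [Fintype ι] {c w : ι → ℂ} (hw : ∀ i, ‖w i‖ ≤ 1)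
    {i₀ : ι} (hc : c i₀ ≠ 0) (hw₀ : ‖w i₀‖ < 1) :
    (∑ i, c i * w i).re < ∑ i, ‖c i‖ := by
  rw [Complex.re_sum]
  exact Finset.sum_lt_sum (fun i _ => re_mul_le_norm_of_norm_le_one (hw i))
    ⟨i₀, Finset.mem_univ i₀, re_mul_lt_norm_of_norm_lt_one hc hw₀⟩

lemma sum_conj_mul_meas_atomD (N : ℕ) (q : Fin N → ℂ) (f θ : ℝ) :
    ∑ n : Fin N, conj (q n) * meas N (atomD N f θ) n = conj (dualPoly N q f θ) := by
  simp only [dualPoly, map_sum, map_mul, meas, atomD, atomA, atomB]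
  refine Finset.sum_congr rfl fun n _ => ?_
  rw [← Complex.exp_conj, ← Complex.exp_add]
  congr 2
  simp only [map_neg, map_mul, map_add, map_pow, Complex.conj_I, Complex.conj_ofReal,
    Complex.conj_ofNat, Complex.conj_natCast]
  push_cast
  ring

lemma sum_conj_mul_meas_sum_smul_atomD (N : ℕ) (q : Fin N → ℂ) {ι : Type*} [Fintype ι]
    (c : ι → ℂ) (f θ : ι → ℝ) :
    ∑ n : Fin N, conj (q n) * meas N (∑ i, c i • atomD N (f i) (θ i)) n
      = ∑ i, c i * conj (dualPoly N q (f i) (θ i)) := by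
  simp only [← sum_conj_mul_meas_atomD, meas, Finset.sum_apply, Pi.smul_apply, smul_eq_mul,
    Finset.mul_sum]
  rw [Finset.sum_comm]
  exact Finset.sum_congr rfl fun i _ => Finset.sum_congr rfl fun n _ => by ring

theorem re_inner_lt_of_offsupport_atom_general (N : ℕ) (U : ℝ) (q : Fin N → ℂ)
    (K : ℕ) (f θ : Fin K → ℝ)
    (hQle : ∀ f' θ' : ℝ, f' ∈ Set.Ico (0 : ℝ) 1 → θ' ∈ Set.Icc (0 : ℝ) U →
      ‖dualPoly N q f' θ'‖ ≤ 1)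
    (hQlt : ∀ f' θ' : ℝ, f' ∈ Set.Ico (0 : ℝ) 1 → θ' ∈ Set.Icc (0 : ℝ) U →
      (f', θ') ∉ Set.range (fun k => (f k, θ k)) →
      ‖dualPoly N q f' θ'‖ < 1)
    (K' : ℕ) (c' : Fin K' → ℂ) (f' θ' : Fin K' → ℝ)
    (hf' : ∀ i, f' i ∈ Set.Ico (0 : ℝ) 1) (hθ' : ∀ i, θ' i ∈ Set.Icc (0 : ℝ) U)
    (hc' : ∀ i, c' i ≠ 0)
    (hout : ∃ i, (f' i, θ' i) ∉ Set.range (fun k => (f k, θ k)))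
    (z : Fin N × Fin ((N - 1) ^ 2 + 1) → ℂ)
    (hz : z = ∑ i, c' i • atomD N (f' i) (θ' i)) :
    (∑ n : Fin N, conj (q n) * meas N z n).re < ∑ i, ‖c' i‖ := by
  obtain ⟨i₀, hi₀⟩ := hout
  rw [hz, sum_conj_mul_meas_sum_smul_atomD]
  refine re_sum_mul_lt_sum_norm (fun i => ?_) (hc' i₀) ?_
  · rw [Complex.norm_conj]
    exact hQle _ _ (hf' i) (hθ' i)
  · rw [Complex.norm_conj]
    exact hQlt _ _ (hf' i₀) (hθ' i₀) hi₀

/-- If the dual polynomial is bounded by one on the constrained domain and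
strictly below one off the support set `D`, then any atomic decomposition using an atom
outside `D` has `Re⟨q, Pz⟩` strictly below its coefficient ℓ₁-mass. -/
theorem re_inner_lt_of_offsupport_atom (N : ℕ) (hN : 2 ≤ N) (U : ℝ)
    (hU : U ∈ Set.Ioo (0 : ℝ) 1) (q : Fin N → ℂ)
    (K : ℕ) (f θ : Fin K → ℝ)
    (hf : ∀ k, f k ∈ Set.Ico (0 : ℝ) 1) (hθ : ∀ k, θ k ∈ Set.Icc (0 : ℝ) U)
    (hQle : ∀ f' θ' : ℝ, f' ∈ Set.Ico (0 : ℝ) 1 → θ' ∈ Set.Icc (0 : ℝ) U →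
      ‖dualPoly N q f' θ'‖ ≤ 1)
    (hQlt : ∀ f' θ' : ℝ, f' ∈ Set.Ico (0 : ℝ) 1 → θ' ∈ Set.Icc (0 : ℝ) U →
      (f', θ') ∉ Set.range (fun k => (f k, θ k)) →
      ‖dualPoly N q f' θ'‖ < 1)
    (K' : ℕ) (c' : Fin K' → ℂ) (f' θ' : Fin K' → ℝ)
    (hf' : ∀ i, f' i ∈ Set.Ico (0 : ℝ) 1) (hθ' : ∀ i, θ' i ∈ Set.Icc (0 : ℝ) U)
    (hdist' : Function.Injective (fun i => (f' i, θ' i)))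
    (hc' : ∀ i, c' i ≠ 0)
    (hout : ∃ i, (f' i, θ' i) ∉ Set.range (fun k => (f k, θ k)))
    (z : Fin N × Fin ((N - 1) ^ 2 + 1) → ℂ)
    (hz : z = ∑ i, c' i • atomD N (f' i) (θ' i)) :
    (∑ n : Fin N, conj (q n) * meas N z n).re < ∑ i, ‖c' i‖ :=
  re_inner_lt_of_offsupport_atom_general N U q K f θ hQle hQlt K' c' f' θ' hf' hθ' hc' hout z hz

end
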